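/- Let (P_1^*, …, P_k^*) be a partition of a finite set P ⊆ H^d with centroids c_1^*, …, c_k^*, and let c_1, …, c_k ∈ R^d with c_t agreeing with sampled values on a family of disjoint index sets. Suppose the sampling phases S = {(t_1, I_1), …, (t_m, I_m)} satisfy: for each s = (t, I) ∈ S, cost_I(R^s, c_t) ≤ (1+α)·cost_I(R^s, c(R^s)) where R^s ⊆ P_t^*, and the index sets {I : (t, I) ∈ S} for each fixed t are pairwise disjoint subsets of [d]. Then Σ_{s=(t,I)∈S} cost_I(R^s, c_t) ≤ (1+α)·Σ_t cost(P_t^*, c_t^*). -/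

import Mathlib

open Finset

/-- Centroid of a finite set of points with missing entries (coordinatewise mean over
the defined entries). -/
noncomputable def centroid {d : ℕ} (P : Finset (Fin d → Option ℝ)) (i : Fin d) : Option ℝ :=
  if (P.filter fun x => x i ≠ none).Nonempty then
    some ((∑ x ∈ P.filter fun x => x i ≠ none, (x i).getD 0) /
      (P.filter fun x => x i ≠ none).card)
  else none

/-- Cost restricted to a coordinate set `I`, against a fully specified center. -/
noncomputable def costIR {d : ℕ} (I : Finset (Fin d)) (Q : Finset (Fin d → Option ℝ))
    (y : Fin d → ℝ) : ℝ :=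
  ∑ x ∈ Q, ∑ i ∈ I, match x i with
    | some a => (a - y i) ^ 2
    | none => 0

/-- Cost restricted to a coordinate set `I`, against a center with missing entries. -/
noncomputable def costIH {d : ℕ} (I : Finset (Fin d)) (Q : Finset (Fin d → Option ℝ))
    (u : Fin d → Option ℝ) : ℝ :=
  ∑ x ∈ Q, ∑ i ∈ I, match x i, u i with
    | some a, some b => (a - b) ^ 2
    | _, _ => 0

noncomputable def gg (a b : Option ℝ) : ℝ := match a, b with
  | some x, some y => (x - y) ^ 2
  | _, _ => 0

lemma gg_nonneg (a b : Option ℝ) : 0 ≤ gg a b := by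
  cases a <;> cases b <;> simp [gg] <;> positivity

lemma costIH_eq {d : ℕ} (I : Finset (Fin d)) (Q : Finset (Fin d → Option ℝ))
    (u : Fin d → Option ℝ) : costIH I Q u = ∑ i ∈ I, ∑ x ∈ Q, gg (x i) (u i) := by
  rw [costIH, Finset.sum_comm]; rfl

lemma sum_gg_some {d : ℕ} (Q : Finset (Fin d → Option ℝ)) (i : Fin d) (cv : ℝ) :
    ∑ x ∈ Q, gg (x i) (some cv)
      = ∑ x ∈ Q.filter (fun x => x i ≠ none), ((x i).getD 0 - cv) ^ 2 := by
  rw [Finset.sum_filter]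
  refine Finset.sum_congr rfl fun x _ => ?_
  cases hx : x i <;> simp [gg, hx]

lemma sq_sum_min {X : Type*} (Q : Finset X) (v : X → ℝ) (b : ℝ) :
    ∑ x ∈ Q, (v x - (∑ x ∈ Q, v x) / Q.card) ^ 2 ≤ ∑ x ∈ Q, (v x - b) ^ 2 := by
  rcases Q.eq_empty_or_nonempty with h | h
  · simp [h]
  · have hn : (Q.card : ℝ) ≠ 0 := by
      exact Nat.cast_ne_zero.mpr (Finset.card_pos.mpr h).ne'
    set μ := (∑ x ∈ Q, v x) / Q.card with hμdef
    have hμ : ∑ x ∈ Q, (v x - μ) = 0 := by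
      rw [Finset.sum_sub_distrib, Finset.sum_const, nsmul_eq_mul, hμdef]
      field_simp
      ring
    have e1 : ∑ x ∈ Q, (v x - b) ^ 2
        = ∑ x ∈ Q, ((v x - μ) ^ 2 + 2 * (μ - b) * (v x - μ) + (μ - b) ^ 2) :=
      Finset.sum_congr rfl fun x _ => by ring
    rw [e1, Finset.sum_add_distrib, Finset.sum_add_distrib, ← Finset.mul_sum, hμ,
      Finset.sum_const, nsmul_eq_mul]
    have : (0:ℝ) ≤ (Q.card : ℝ) * (μ - b) ^ 2 := by positivity
    linarith

/-- Coordinatewise: cost of `Q` against its own centroid is at most cost of a superset `P`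
against the centroid of `P`. -/
lemma key_coord {d : ℕ} (Q P : Finset (Fin d → Option ℝ)) (hQP : Q ⊆ P) (i : Fin d) :
    ∑ x ∈ Q, gg (x i) (centroid Q i) ≤ ∑ x ∈ P, gg (x i) (centroid P i) := by
  have hfilt : Q.filter (fun x => x i ≠ none) ⊆ P.filter (fun x => x i ≠ none) :=
    Finset.filter_subset_filter _ hQP
  have hmono : ∀ u : Option ℝ, ∑ x ∈ Q, gg (x i) u ≤ ∑ x ∈ P, gg (x i) u := fun u =>
    Finset.sum_le_sum_of_subset_of_nonneg hQP fun x _ _ => gg_nonneg _ _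
  rcases (Q.filter (fun x => x i ≠ none)).eq_empty_or_nonempty with hQe | hQne
  · have : ∑ x ∈ Q, gg (x i) (centroid Q i) = 0 := by
      refine Finset.sum_eq_zero fun x hx => ?_
      have hxnone : x i = none := by
        by_contra hne
        exact (Finset.filter_eq_empty_iff.mp hQe hx) hne
      simp [gg, hxnone]
    rw [this]
    exact Finset.sum_nonneg fun x _ => gg_nonneg _ _
  · have hPne : (P.filter (fun x => x i ≠ none)).Nonempty := hQne.mono hfilt
    unfold _root_.centroid
    rw [if_pos hQne, if_pos hPne]
    rw [sum_gg_some, sum_gg_some]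
    refine le_trans (sq_sum_min (Q.filter fun x => x i ≠ none)
      (fun x => (x i).getD 0)
      ((∑ x ∈ P.filter fun x => x i ≠ none, (x i).getD 0) /
        (P.filter fun x => x i ≠ none).card)) ?_
    exact Finset.sum_le_sum_of_subset_of_nonneg hfilt fun x _ _ => by positivity

/-- Summing the per-phase `(1+α)`-approximation guarantees over all sampling phases
bounds the total sampled cost by `(1+α)` times the optimal clustering cost. -/
theorem stmt14 {d k m : ℕ} (α : ℝ) (hα : 0 < α)
    (Pstar : Fin k → Finset (Fin d → Option ℝ))
    (c : Fin k → (Fin d → ℝ))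
    (t : Fin m → Fin k) (I : Fin m → Finset (Fin d))
    (R : Fin m → Finset (Fin d → Option ℝ))
    (hR : ∀ s, R s ⊆ Pstar (t s))
    (happrox : ∀ s, costIR (I s) (R s) (c (t s))
      ≤ (1 + α) * costIH (I s) (R s) (centroid (R s)))
    (hdisj : ∀ s s', s ≠ s' → t s = t s' → Disjoint (I s) (I s')) :
    ∑ s, costIR (I s) (R s) (c (t s))
      ≤ (1 + α) * ∑ u : Fin k, costIH Finset.univ (Pstar u) (centroid (Pstar u)) := by
  classical
  set h : Fin k → Fin d → ℝ :=
    fun u i => ∑ x ∈ Pstar u, gg (x i) (centroid (Pstar u) i) with hh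
  have hnn : ∀ u i, 0 ≤ h u i := fun u i =>
    Finset.sum_nonneg fun x _ => gg_nonneg _ _
  calc ∑ s, costIR (I s) (R s) (c (t s))
      ≤ ∑ s, (1 + α) * costIH (I s) (R s) (centroid (R s)) :=
        Finset.sum_le_sum fun s _ => happrox s
    _ = (1 + α) * ∑ s, costIH (I s) (R s) (centroid (R s)) := by
        rw [Finset.mul_sum]
    _ ≤ (1 + α) * ∑ u : Fin k, costIH Finset.univ (Pstar u) (centroid (Pstar u)) := by
        refine mul_le_mul_of_nonneg_left ?_ (by linarith)
        calc ∑ s, costIH (I s) (R s) (centroid (R s))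
            ≤ ∑ s, ∑ i ∈ I s, h (t s) i := by
              refine Finset.sum_le_sum fun s _ => ?_
              rw [costIH_eq]
              exact Finset.sum_le_sum fun i _ => key_coord _ _ (hR s) i
          _ = ∑ u : Fin k, ∑ s ∈ Finset.univ.filter (fun s => t s = u),
                ∑ i ∈ I s, h (t s) i :=
              (Finset.sum_fiberwise_of_maps_to (fun s _ => Finset.mem_univ (t s)) _).symm
          _ ≤ ∑ u : Fin k, costIH Finset.univ (Pstar u) (centroid (Pstar u)) := by
              refine Finset.sum_le_sum fun u _ => ?_
              rw [costIH_eq]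
              have hpd : (↑(Finset.univ.filter (fun s => t s = u)) :
                  Set (Fin m)).PairwiseDisjoint I := by
                intro s hs s' hs' hne
                simp only [Finset.coe_filter, Set.mem_setOf_eq] at hs hs'
                exact hdisj s s' hne (hs.2.trans hs'.2.symm)
              calc ∑ s ∈ Finset.univ.filter (fun s => t s = u), ∑ i ∈ I s, h (t s) i
                  = ∑ s ∈ Finset.univ.filter (fun s => t s = u), ∑ i ∈ I s, h u i := by
                    refine Finset.sum_congr rfl fun s hs => ?_
                    rw [(Finset.mem_filter.mp hs).2]
                _ = ∑ i ∈ (Finset.univ.filter (fun s => t s = u)).biUnion I, h u i :=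
                    (Finset.sum_biUnion hpd).symm
                _ ≤ ∑ i : Fin d, h u i :=
                    Finset.sum_le_sum_of_subset_of_nonneg
                      (Finset.subset_univ _) (fun i _ _ => hnn u i)
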